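/- Let d ≥ 1, p, q, r ∈ (0,∞] and r₁ ∈ (0, min(p,q,r)]. For a measurable function F: ℝ^d × ℝ^d → ℂ define b(j,ι) = ess sup_{ξ∈ι+[0,2π]^d} ‖F(·,ξ)‖_{L^r(j+[0,1]^d)} and c(j,ι) = ‖F‖_{L^{r₁}((j+[0,1]^d)×(ι+[0,2π]^d))} for j ∈ ℤ^d, ι ∈ 2πℤ^d, and g(ξ) = ‖(‖F(·,ξ)‖_{L^r(j+[0,1]^d)})_{j∈ℤ^d}‖_{ℓ^p}. Then there exist constants C₁, C₂ > 0, independent of F, such that ‖g‖_{L^q(ℝ^d)} ≤ C₁·‖(‖(b(j,ι))_{j∈ℤ^d}‖_{ℓ^p})_{ι∈2πℤ^d}‖_{ℓ^q} and ‖(‖(c(j,ι))_{j∈ℤ^d}‖_{ℓ^p})_{ι∈2πℤ^d}‖_{ℓ^q} ≤ C₂·‖g‖_{L^q(ℝ^d)}; all quantities may be +∞. -/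

import Mathlib

/-!
Cutting `ℝ^d` into the cells `Q_ι = 2πι + [0,2π]^d` turns the `L^q` norm in `ξ` into the `ℓ^q` sum
of the local `L^q(Q_ι)` norms. For the first inequality, on `Q_ι` the inner `ℓ^p` norm is bounded
a.e. by the `ℓ^p` norm of the essential suprema over `Q_ι`, so each local norm costs `|Q_ι|^{1/q}`.
For the second, Tonelli writes the `L^{r₁}` norm over `(j + [0,1]^d) × Q_ι` as the `L^{r₁}(Q_ι)`
norm of `ξ ↦ ‖F(·, ξ)‖_{L^{r₁}(j + [0,1]^d)}`; Minkowski's integral inequality (`r₁ ≤ p`) moves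
the `ℓ^p` norm inside, Hölder on the unit cells (`r₁ ≤ r`) replaces `L^{r₁}` by `L^r`, and Hölder
on `Q_ι` (`r₁ ≤ q`) costs `|Q_ι|^{1/r₁ - 1/q}`.
-/

open MeasureTheory Complex Real
open scoped InnerProductSpace ENNReal

noncomputable section

/-- `ℝ^d` as a Euclidean space. -/
abbrev Ed (d : ℕ) := EuclideanSpace ℝ (Fin d)

/-- The unit cell `j + [0,1]^d ⊆ ℝ^d`. -/
def cell (d : ℕ) (j : Fin d → ℤ) : Set (Ed d) :=
  {x | ∀ i, x i ∈ Set.Icc (j i : ℝ) (j i + 1)}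

/-- The cell `2πι + [0,2π]^d ⊆ ℝ^d`, `ι ∈ ℤ^d`. -/
def cell2pi (d : ℕ) (ι : Fin d → ℤ) : Set (Ed d) :=
  {x | ∀ i, x i ∈ Set.Icc (2*π*(ι i)) (2*π*(ι i) + 2*π)}

/-- The `ℓ^p` quasi-norm of an `ℝ≥0∞`-valued sequence, `p ∈ (0,∞]`. -/
def lpSeq {ι : Type*} (p : ℝ≥0∞) (a : ι → ℝ≥0∞) : ℝ≥0∞ :=
  if p = ∞ then ⨆ j, a j else (∑' j, a j ^ p.toReal) ^ (1 / p.toReal)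

/-- The `L^p` quasi-norm of an `ℝ≥0∞`-valued function, `p ∈ (0,∞]`. -/
def lpENN {α : Type*} [MeasurableSpace α] (p : ℝ≥0∞) (μ : Measure α) (g : α → ℝ≥0∞) : ℝ≥0∞ :=
  if p = ∞ then essSup g μ else (∫⁻ x, g x ^ p.toReal ∂μ) ^ (1 / p.toReal)

section LpSeq

variable {J : Type*}

lemma lpSeq_top (a : J → ℝ≥0∞) : lpSeq ∞ a = ⨆ j, a j := if_pos rfl

lemma lpSeq_of_ne_top {p : ℝ≥0∞} (hp : p ≠ ∞) (a : J → ℝ≥0∞) :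
    lpSeq p a = (∑' j, a j ^ p.toReal) ^ (1 / p.toReal) := if_neg hp

lemma lpSeq_mono (p : ℝ≥0∞) {a b : J → ℝ≥0∞} (h : a ≤ b) : lpSeq p a ≤ lpSeq p b := by
  rcases eq_or_ne p ∞ with rfl | hp
  · simp only [lpSeq_top]
    exact iSup_mono h
  · simp only [lpSeq_of_ne_top hp]
    gcongr with j
    exact h j

lemma lpSeq_const_mul {p : ℝ≥0∞} (hp : p ≠ 0) (c : ℝ≥0∞) (a : J → ℝ≥0∞) :
    lpSeq p (fun j => c * a j) = c * lpSeq p a := by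
  rcases eq_or_ne p ∞ with rfl | hp_top
  · simp only [lpSeq_top, ENNReal.mul_iSup]
  · have hp' : 0 < p.toReal := ENNReal.toReal_pos hp hp_top
    simp only [lpSeq_of_ne_top hp_top, ENNReal.mul_rpow_of_nonneg _ _ hp'.le, ENNReal.tsum_mul_left]
    rw [ENNReal.mul_rpow_of_nonneg _ _ (by positivity), ← ENNReal.rpow_mul,
      mul_one_div_cancel hp'.ne', ENNReal.rpow_one]

lemma lpSeq_rpow (p : ℝ≥0∞) {s : ℝ} (hs : 0 < s) (a : J → ℝ≥0∞) :
    lpSeq p (fun j => a j ^ s) = lpSeq (p * ENNReal.ofReal s) a ^ s := by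
  rcases eq_or_ne p ∞ with rfl | hp_top
  · rw [ENNReal.top_mul (by simpa using hs), lpSeq_top, lpSeq_top]
    exact ((ENNReal.orderIsoRpow s hs).map_iSup a).symm
  have hps : p * ENNReal.ofReal s ≠ ∞ := ENNReal.mul_ne_top hp_top ENNReal.ofReal_ne_top
  rw [lpSeq_of_ne_top hp_top, lpSeq_of_ne_top hps, ENNReal.toReal_mul, ENNReal.toReal_ofReal hs.le]
  rcases eq_or_ne p.toReal 0 with hp0 | hp0
  · simp [hp0]
  simp only [← ENNReal.rpow_mul, mul_comm s]
  congr 1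
  rw [div_mul_eq_mul_div, one_mul, div_mul_cancel_right₀ hs.ne', one_div]

lemma measurable_lpSeq {β : Type*} [MeasurableSpace β] [Countable J] (p : ℝ≥0∞)
    {a : J → β → ℝ≥0∞} (ha : ∀ j, Measurable (a j)) :
    Measurable fun ξ => lpSeq p (fun j => a j ξ) := by
  unfold lpSeq
  split
  · exact Measurable.iSup ha
  · exact (Measurable.tsum fun j => (ha j).pow_const _).pow_const _

variable {α : Type*} [MeasurableSpace α] {μ : Measure α}

lemma Lp_sum_lintegral_le_lintegral_Lp_sum (s : Finset J) {σ : ℝ} (hσ : 1 ≤ σ)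
    {f : J → α → ℝ≥0∞} (hf : ∀ j, AEMeasurable (f j) μ) :
    (∑ j ∈ s, (∫⁻ x, f j x ∂μ) ^ σ) ^ (1 / σ) ≤ ∫⁻ x, (∑ j ∈ s, f j x ^ σ) ^ (1 / σ) ∂μ := by
  rcases hσ.eq_or_lt with rfl | hσ
  · simpa using (lintegral_finsetSum' s fun j _ => hf j).ge
  have hσ0 : 0 < σ := by linarith
  have hconj := Real.HolderConjugate.conjExponent hσ
  set σ' := σ.conjExponent
  set A := fun j => ∫⁻ x, f j x ∂μ
  set S := ∑ j ∈ s, A j ^ σ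
  set R := ∫⁻ x, (∑ j ∈ s, f j x ^ σ) ^ (1 / σ) ∂μ
  have hAR : ∀ j ∈ s, A j ≤ R := fun j hj => lintegral_mono fun x =>
    calc f j x = (f j x ^ σ) ^ (1 / σ) := by
          rw [← ENNReal.rpow_mul, mul_one_div_cancel hσ0.ne', ENNReal.rpow_one]
      _ ≤ (∑ j ∈ s, f j x ^ σ) ^ (1 / σ) := by
          gcongr
          exact Finset.single_le_sum (f := fun j => f j x ^ σ) (fun _ _ => zero_le) hj
  rcases eq_or_ne R ∞ with hR | hR
  · simp [hR]
  have hS : S ≠ ∞ := ENNReal.sum_ne_top.2 fun j hj =>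
    ENNReal.rpow_ne_top_of_nonneg hσ0.le ((hAR j hj).trans_lt hR.lt_top).ne
  rcases eq_or_ne S 0 with hS0 | hS0
  · simp [hS0, ENNReal.zero_rpow_of_pos (inv_pos.2 hσ0)]
  -- Duality: pair `f j` with the weights `A j ^ (σ - 1)` and apply Hölder pointwise.
  have key : S ^ (1 / σ') * S ^ (1 / σ) ≤ S ^ (1 / σ') * R := by
    calc S ^ (1 / σ') * S ^ (1 / σ) = S := by
          rw [← ENNReal.rpow_add _ _ hS0 hS, one_div, one_div, add_comm,
            hconj.inv_add_inv_eq_one, ENNReal.rpow_one]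
      _ = ∑ j ∈ s, A j ^ (σ - 1) * A j := by
          refine Finset.sum_congr rfl fun j _ => ?_
          conv_lhs => rw [← sub_add_cancel σ 1]
          rw [ENNReal.rpow_add_of_nonneg _ _ (by linarith) zero_le_one, ENNReal.rpow_one]
      _ = ∫⁻ x, ∑ j ∈ s, A j ^ (σ - 1) * f j x ∂μ := by
          rw [lintegral_finsetSum' s fun j _ => (hf j).const_mul _]
          simp only [lintegral_const_mul'' _ (hf _)]
          rfl
      _ ≤ ∫⁻ x, S ^ (1 / σ') * (∑ j ∈ s, f j x ^ σ) ^ (1 / σ) ∂μ := by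
          refine lintegral_mono fun x => (ENNReal.inner_le_Lp_mul_Lq s _ _ hconj.symm).trans_eq ?_
          simp only [← ENNReal.rpow_mul, hconj.sub_one_mul_conj, S]
      _ = S ^ (1 / σ') * R := lintegral_const_mul' _ _
          (ENNReal.rpow_ne_top_of_nonneg (one_div_pos.2 hconj.symm.pos).le hS)
  exact (ENNReal.mul_le_mul_iff_right (by simp [hS0, hS]) (by simp [hS0, hS])).1 key

lemma lpSeq_lintegral_le_lintegral_lpSeq {p : ℝ≥0∞} (hp : 1 ≤ p) {f : J → α → ℝ≥0∞}
    (hf : ∀ j, AEMeasurable (f j) μ) :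
    lpSeq p (fun j => ∫⁻ x, f j x ∂μ) ≤ ∫⁻ x, lpSeq p (fun j => f j x) ∂μ := by
  rcases eq_or_ne p ∞ with rfl | hp_top
  · simp only [lpSeq_top]
    exact iSup_le fun j => lintegral_mono fun x => le_iSup (fun j => f j x) j
  have hσ : 1 ≤ p.toReal := by simpa using ENNReal.toReal_mono hp_top hp
  simp only [lpSeq_of_ne_top hp_top]
  rw [one_div, ENNReal.rpow_inv_le_iff (by linarith), ENNReal.tsum_eq_iSup_sum]
  refine iSup_le fun s => ?_
  rw [← ENNReal.rpow_inv_le_iff (by linarith), ← one_div]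
  refine (Lp_sum_lintegral_le_lintegral_Lp_sum s hσ hf).trans (lintegral_mono fun x => ?_)
  gcongr
  exact ENNReal.sum_le_tsum s

lemma lpSeq_eLpNorm_le_eLpNorm_lpSeq {p t : ℝ≥0∞} (ht : t ≠ 0) (htp : t ≤ p)
    {f : J → α → ℝ≥0∞} (hf : ∀ j, AEMeasurable (f j) μ) :
    lpSeq p (fun j => eLpNorm (f j) t μ) ≤ eLpNorm (fun x => lpSeq p (fun j => f j x)) t μ := by
  rcases eq_or_ne t ∞ with rfl | ht_top
  · obtain rfl : p = ∞ := top_le_iff.1 htp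
    rw [lpSeq_top]
    exact iSup_le fun j => eLpNorm_mono_enorm fun x => le_iSup (fun j => f j x) j
  set τ := t.toReal
  have hτ : 0 < τ := ENNReal.toReal_pos ht ht_top
  have hσ : 1 ≤ p * ENNReal.ofReal (1 / τ) := by
    calc (1 : ℝ≥0∞) = ENNReal.ofReal τ * ENNReal.ofReal (1 / τ) := by
          rw [← ENNReal.ofReal_mul hτ.le, mul_one_div_cancel hτ.ne', ENNReal.ofReal_one]
      _ ≤ p * ENNReal.ofReal (1 / τ) := by
          rw [ENNReal.ofReal_toReal ht_top]
          gcongr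
  simp only [eLpNorm_eq_lintegral_rpow_enorm_toReal ht ht_top, enorm_eq_self]
  rw [lpSeq_rpow p (one_div_pos.2 hτ)]
  gcongr
  refine (lpSeq_lintegral_le_lintegral_lpSeq hσ fun j => (hf j).pow_const τ).trans_eq ?_
  congr 1
  funext x
  rw [lpSeq_rpow _ hτ, mul_assoc, ← ENNReal.ofReal_mul (by positivity), one_div_mul_cancel hτ.ne',
    ENNReal.ofReal_one, mul_one]

lemma eLpNorm_sum_measure {ε I : Type*} [ENorm ε] [Countable I] {q : ℝ≥0∞} (hq : q ≠ 0)
    (f : α → ε) (μ : I → Measure α) :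
    eLpNorm f q (Measure.sum μ) = lpSeq q (fun i => eLpNorm f q (μ i)) := by
  rcases eq_or_ne q ∞ with rfl | hq_top
  · simp only [eLpNorm_exponent_top, eLpNormEssSup, lpSeq_top]
    refine le_antisymm (essSup_le_of_ae_le _ (Measure.ae_sum_iff.2 fun i => ?_))
      (iSup_le fun i => essSup_mono_measure' (Measure.le_sum μ i))
    exact (ENNReal.ae_le_essSup _).mono fun x hx =>
      hx.trans (le_iSup (fun i => essSup (fun x => ‖f x‖ₑ) (μ i)) i)
  · have hq' : q.toReal ≠ 0 := (ENNReal.toReal_pos hq hq_top).ne'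
    simp only [eLpNorm_eq_lintegral_rpow_enorm_toReal hq hq_top, lintegral_sum_measure,
      lpSeq_of_ne_top hq_top, ← ENNReal.rpow_mul, one_div_mul_cancel hq', ENNReal.rpow_one]

lemma lpENN_eq_eLpNorm {q : ℝ≥0∞} (hq : q ≠ 0) (g : α → ℝ≥0∞) :
    lpENN q μ g = eLpNorm g q μ := by
  rcases eq_or_ne q ∞ with rfl | hq_top
  · simp [lpENN, eLpNorm_exponent_top, eLpNormEssSup]
  · simp [lpENN, hq_top, eLpNorm_eq_lintegral_rpow_enorm_toReal hq hq_top]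

end LpSeq

section Fubini

variable {α β E : Type*} [MeasurableSpace α] [MeasurableSpace β] {μ : Measure α} {ν : Measure β}
  [NormedAddCommGroup E] [MeasurableSpace E] [OpensMeasurableSpace E]

lemma measurable_eLpNorm_section [SFinite μ] {p : ℝ≥0∞} (hp : p ≠ ∞) {F : α × β → E}
    (hF : Measurable F) : Measurable fun y => eLpNorm (fun x => F (x, y)) p μ := by
  rcases eq_or_ne p 0 with rfl | hp0
  · simp only [eLpNorm_exponent_zero]
    exact measurable_const
  simp only [eLpNorm_eq_lintegral_rpow_enorm_toReal hp0 hp]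
  exact (hF.enorm.pow_const _).lintegral_prod_left'.pow_const _

lemma eLpNorm_prod_le_eLpNorm_eLpNorm [SFinite μ] [SFinite ν] (p : ℝ≥0∞) {F : α × β → E}
    (hF : Measurable F) :
    eLpNorm F p (μ.prod ν) ≤ eLpNorm (fun y => eLpNorm (fun x => F (x, y)) p μ) p ν := by
  rcases eq_or_ne p 0 with rfl | hp0
  · simp
  rcases eq_or_ne p ∞ with rfl | hp_top
  · set M := eLpNorm (fun y => eLpNorm (fun x => F (x, y)) ∞ μ) ∞ ν
    have hM : ∀ᵐ y ∂ν, ∀ᵐ x ∂μ, ‖F (x, y)‖ₑ ≤ M := by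
      filter_upwards [enorm_ae_le_eLpNormEssSup (fun y => eLpNorm (fun x => F (x, y)) ∞ μ) ν]
        with y hy
      exact (enorm_ae_le_eLpNormEssSup _ μ).mono fun x hx => hx.trans hy
    have hS : MeasurableSet {z : α × β | ‖F (z.1, z.2)‖ₑ ≤ M} :=
      measurableSet_le hF.enorm measurable_const
    rw [eLpNorm_exponent_top]
    exact essSup_le_of_ae_le _ ((Measure.ae_prod_iff_ae_ae hS).2 ((Measure.ae_ae_comm hS).2 hM))
  · have hp' : p.toReal ≠ 0 := (ENNReal.toReal_pos hp0 hp_top).ne'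
    simp only [eLpNorm_eq_lintegral_rpow_enorm_toReal hp0 hp_top, enorm_eq_self,
      ← ENNReal.rpow_mul, one_div_mul_cancel hp', ENNReal.rpow_one]
    rw [lintegral_prod_symm' _ (hF.enorm.pow_const _)]

end Fubini

section Cells

variable {d : ℕ}

lemma volume_setOf_forall_mem_Icc (a b : Fin d → ℝ) :
    volume {x : Ed d | ∀ i, x i ∈ Set.Icc (a i) (b i)} = ∏ i, ENNReal.ofReal (b i - a i) := by
  have h : {x : Ed d | ∀ i, x i ∈ Set.Icc (a i) (b i)} = WithLp.ofLp ⁻¹' Set.Icc a b := by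
    ext x
    simp [Pi.le_def, forall_and]
  rw [h, (PiLp.volume_preserving_ofLp (Fin d)).measure_preimage
    measurableSet_Icc.nullMeasurableSet, Real.volume_Icc_pi]

lemma volume_cell (j : Fin d → ℤ) : volume (cell d j) = 1 :=
  (volume_setOf_forall_mem_Icc (fun i => (j i : ℝ)) (fun i => j i + 1)).trans (by simp)

lemma volume_cell2pi (ι : Fin d → ℤ) : volume (cell2pi d ι) = ENNReal.ofReal ((2 * π) ^ d) :=
  (volume_setOf_forall_mem_Icc (fun i => 2 * π * ι i) (fun i => 2 * π * ι i + 2 * π)).trans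
    (by simp [ENNReal.ofReal_pow Real.two_pi_pos.le])

lemma floor_div_eq_iff {L y : ℝ} (hL : 0 < L) {n : ℤ} :
    ⌊y / L⌋ = n ↔ y ∈ Set.Ico (L * n) (L * n + L) := by
  rw [Int.floor_eq_iff, le_div_iff₀ hL, div_lt_iff₀ hL, Set.mem_Ico, add_mul, one_mul, mul_comm]

lemma volume_eq_sum_restrict_cell2pi :
    (volume : Measure (Ed d)) = Measure.sum fun ι => volume.restrict (cell2pi d ι) := by
  set k : Ed d → Fin d → ℤ := fun x i => ⌊x i / (2 * π)⌋
  have hk : Measurable k := measurable_pi_lambda _ fun i =>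
    (((measurable_pi_apply i).comp (WithLp.measurable_ofLp 2 _)).div_const _).floor
  have hae : ∀ ι, k ⁻¹' {ι} =ᵐ[volume] cell2pi d ι := fun ι => by
    have hfib : k ⁻¹' {ι} =
        WithLp.ofLp ⁻¹' Set.univ.pi fun i => Set.Ico (2 * π * ι i) (2 * π * ι i + 2 * π) := by
      ext x
      simp [k, funext_iff, floor_div_eq_iff Real.two_pi_pos]
    have hcell : cell2pi d ι =
        WithLp.ofLp ⁻¹' Set.Icc (fun i => 2 * π * ι i) (fun i => 2 * π * ι i + 2 * π) := by
      ext x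
      simp [cell2pi, Pi.le_def, forall_and]
    rw [hfib, hcell]
    exact (PiLp.volume_preserving_ofLp _).quasiMeasurePreserving.preimage_ae_eq
      Measure.univ_pi_Ico_ae_eq_Icc
  calc (volume : Measure (Ed d)) = volume.restrict (⋃ ι, k ⁻¹' {ι}) := by
        rw [← Set.preimage_iUnion, Set.iUnion_of_singleton, Set.preimage_univ,
          Measure.restrict_univ]
    _ = Measure.sum fun ι => volume.restrict (k ⁻¹' {ι}) :=
        Measure.restrict_iUnion (pairwise_disjoint_fiber k) fun ι => hk (measurableSet_singleton ι)
    _ = Measure.sum fun ι => volume.restrict (cell2pi d ι) := by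
        simp only [Measure.restrict_congr_set (hae _)]

end Cells

lemma one_div_toReal_sub_one_div_toReal_nonneg {s t : ℝ≥0∞} (hs : s ≠ 0) (hst : s ≤ t) :
    0 ≤ 1 / s.toReal - 1 / t.toReal := by
  rcases eq_or_ne t ∞ with rfl | ht
  · simp
  have hs' : 0 < s.toReal := ENNReal.toReal_pos hs (ne_top_of_le_ne_top ht hst)
  exact sub_nonneg.2 (one_div_le_one_div_of_le hs' (ENNReal.toReal_mono ht hst))

section Amalgam

variable {α β E I J : Type*} [MeasurableSpace α] [MeasurableSpace β] [Countable I] [Countable J]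
  {ν : I → Measure β} {V : ℝ≥0∞}

theorem eLpNorm_lpSeq_le_lpSeq_lpSeq_essSup {q : ℝ≥0∞} (hq : q ≠ 0) (p : ℝ≥0∞)
    (hν : ∀ i, ν i Set.univ ≤ V) (a : J → β → ℝ≥0∞) :
    eLpNorm (fun ξ => lpSeq p (fun j => a j ξ)) q (Measure.sum ν) ≤
      V ^ (1 / q.toReal) * lpSeq q (fun i => lpSeq p (fun j => essSup (a j) (ν i))) := by
  rw [eLpNorm_sum_measure hq, ← lpSeq_const_mul hq]
  refine lpSeq_mono q fun i => ?_
  set B := lpSeq p fun j => essSup (a j) (ν i)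
  rcases eq_or_ne (ν i) 0 with hν0 | hν0
  · simp [hν0]
  have hB : ∀ᵐ ξ ∂ν i, lpSeq p (fun j => a j ξ) ≤ B :=
    (ae_all_iff.2 fun j => ENNReal.ae_le_essSup (a j)).mono fun ξ hξ => lpSeq_mono p hξ
  calc eLpNorm (fun ξ => lpSeq p (fun j => a j ξ)) q (ν i)
      ≤ eLpNorm (fun _ => B) q (ν i) := eLpNorm_mono_enorm_ae (by simpa using hB)
    _ = B * ν i Set.univ ^ (1 / q.toReal) := by rw [eLpNorm_const B hq hν0, enorm_eq_self]
    _ ≤ V ^ (1 / q.toReal) * B := by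
        rw [mul_comm]
        gcongr
        exact hν i

variable [NormedAddCommGroup E] [MeasurableSpace E] [OpensMeasurableSpace E]
  [SecondCountableTopology E]
  {μ : J → Measure α} [∀ j, SFinite (μ j)] [∀ i, SFinite (ν i)]

theorem lpSeq_lpSeq_eLpNorm_prod_le (hμ : ∀ j, μ j Set.univ ≤ 1) (hν : ∀ i, ν i Set.univ ≤ V)
    {p q r r₁ : ℝ≥0∞} (hr₁ : r₁ ≠ 0) (hr₁p : r₁ ≤ p) (hr₁q : r₁ ≤ q) (hr₁r : r₁ ≤ r)
    {F : α × β → E} (hF : Measurable F) :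
    lpSeq q (fun i => lpSeq p (fun j => eLpNorm F r₁ ((μ j).prod (ν i)))) ≤
      V ^ (1 / r₁.toReal - 1 / q.toReal) *
        eLpNorm (fun ξ => lpSeq p (fun j => eLpNorm (fun x => F (x, ξ)) r (μ j))) q
          (Measure.sum ν) := by
  have hq : q ≠ 0 := ne_bot_of_le_ne_bot hr₁ hr₁q
  rcases eq_or_ne r₁ ∞ with rfl | hr₁_top
  · obtain ⟨rfl, rfl, rfl⟩ : p = ∞ ∧ q = ∞ ∧ r = ∞ :=
      ⟨top_le_iff.1 hr₁p, top_le_iff.1 hr₁q, top_le_iff.1 hr₁r⟩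
    simp only [ENNReal.toReal_top, div_zero, sub_zero, ENNReal.rpow_zero, one_mul,
      eLpNorm_sum_measure hq, lpSeq_top]
    exact iSup_mono fun i => iSup_le fun j => (eLpNorm_prod_le_eLpNorm_eLpNorm ∞ hF).trans
      (eLpNorm_mono_enorm fun ξ => le_iSup (fun j => eLpNorm (fun x => F (x, ξ)) ∞ (μ j)) j)
  set v : J → β → ℝ≥0∞ := fun j ξ => eLpNorm (fun x => F (x, ξ)) r₁ (μ j)
  have hv : ∀ j, Measurable (v j) := fun j => measurable_eLpNorm_section hr₁_top hF
  have hvg : ∀ ξ, lpSeq p (fun j => v j ξ) ≤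
      lpSeq p (fun j => eLpNorm (fun x => F (x, ξ)) r (μ j)) := fun ξ => lpSeq_mono p fun j =>
    (eLpNorm_le_eLpNorm_mul_rpow_measure_univ hr₁r
      (hF.comp measurable_prodMk_right).aestronglyMeasurable).trans
      (mul_le_of_le_one_right zero_le
        (ENNReal.rpow_le_one (hμ j) (one_div_toReal_sub_one_div_toReal_nonneg hr₁ hr₁r)))
  rw [eLpNorm_sum_measure hq, ← lpSeq_const_mul hq]
  refine lpSeq_mono q fun i => ?_
  calc lpSeq p (fun j => eLpNorm F r₁ ((μ j).prod (ν i)))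
      ≤ lpSeq p (fun j => eLpNorm (v j) r₁ (ν i)) :=
        lpSeq_mono p fun j => eLpNorm_prod_le_eLpNorm_eLpNorm r₁ hF
    _ ≤ eLpNorm (fun ξ => lpSeq p (fun j => v j ξ)) r₁ (ν i) :=
        lpSeq_eLpNorm_le_eLpNorm_lpSeq hr₁ hr₁p fun j => (hv j).aemeasurable
    _ ≤ eLpNorm (fun ξ => lpSeq p (fun j => v j ξ)) q (ν i) *
          ν i Set.univ ^ (1 / r₁.toReal - 1 / q.toReal) :=
        eLpNorm_le_eLpNorm_mul_rpow_measure_univ hr₁q (measurable_lpSeq p hv).aestronglyMeasurable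
    _ ≤ V ^ (1 / r₁.toReal - 1 / q.toReal) *
          eLpNorm (fun ξ => lpSeq p (fun j => eLpNorm (fun x => F (x, ξ)) r (μ j))) q (ν i) := by
        rw [mul_comm]
        exact mul_le_mul' (ENNReal.rpow_le_rpow (hν i)
          (one_div_toReal_sub_one_div_toReal_nonneg hr₁ hr₁q))
          (eLpNorm_mono_enorm fun ξ => by simpa using hvg ξ)

end Amalgam

theorem stmt11_general (d : ℕ) (p q r r₁ : ℝ≥0∞)
    (hq : 0 < q) (hr₁ : 0 < r₁) (hr₁le : r₁ ≤ min p (min q r)) :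
    ∃ C₁ C₂ : ℝ, 0 < C₁ ∧ 0 < C₂ ∧
      ∀ F : Ed d × Ed d → ℂ, Measurable F →
        lpENN q volume (fun ξ : Ed d => lpSeq p (fun j : Fin d → ℤ =>
            eLpNorm (fun x => F (x, ξ)) r (volume.restrict (cell d j))))
          ≤ ENNReal.ofReal C₁ *
            lpSeq q (fun ι : Fin d → ℤ => lpSeq p (fun j : Fin d → ℤ =>
              essSup (fun ξ : Ed d => eLpNorm (fun x => F (x, ξ)) r (volume.restrict (cell d j)))
                (volume.restrict (cell2pi d ι)))) ∧
        lpSeq q (fun ι : Fin d → ℤ => lpSeq p (fun j : Fin d → ℤ =>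
            eLpNorm F r₁ (volume.restrict ((cell d j) ×ˢ (cell2pi d ι)))))
          ≤ ENNReal.ofReal C₂ *
            lpENN q volume (fun ξ : Ed d => lpSeq p (fun j : Fin d → ℤ =>
              eLpNorm (fun x => F (x, ξ)) r (volume.restrict (cell d j)))) := by
  obtain ⟨hr₁p, hr₁q, hr₁r⟩ : r₁ ≤ p ∧ r₁ ≤ q ∧ r₁ ≤ r := by simpa only [le_min_iff] using hr₁le
  have hV : ∀ ι, volume.restrict (cell2pi d ι) Set.univ ≤ ENNReal.ofReal ((2 * π) ^ d) :=
    fun ι => by rw [Measure.restrict_apply_univ, volume_cell2pi]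
  have hU : ∀ j, volume.restrict (cell d j) Set.univ ≤ 1 :=
    fun j => by rw [Measure.restrict_apply_univ, volume_cell]
  refine ⟨((2 * π) ^ d) ^ (1 / q.toReal), ((2 * π) ^ d) ^ (1 / r₁.toReal - 1 / q.toReal),
    by positivity, by positivity, fun F hF => ⟨?_, ?_⟩⟩
  · have h := eLpNorm_lpSeq_le_lpSeq_lpSeq_essSup hq.ne' p hV
      fun j ξ => eLpNorm (fun x => F (x, ξ)) r (volume.restrict (cell d j))
    rwa [← volume_eq_sum_restrict_cell2pi, ← lpENN_eq_eLpNorm hq.ne',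
      ENNReal.ofReal_rpow_of_pos (by positivity)] at h
  · have h := lpSeq_lpSeq_eLpNorm_prod_le hU hV hr₁.ne' hr₁p hr₁q hr₁r hF
    rw [← volume_eq_sum_restrict_cell2pi, ← lpENN_eq_eLpNorm hq.ne',
      ENNReal.ofReal_rpow_of_pos (by positivity)] at h
    simpa only [Measure.prod_restrict, ← Measure.volume_eq_prod] using h

/-- comparison of Wiener amalgam quasi-norms `𝖶^{r,∞}(ℓ^{p,q})`,
`𝖶^r_1(ℓ^p, L^q)` and `𝖶^{r₁}(ℓ^{p,q})` on the lattice `ℤ^d × 2πℤ^d`. -/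
theorem stmt11 (d : ℕ) (hd : 1 ≤ d) (p q r r₁ : ℝ≥0∞)
    (hp : 0 < p) (hq : 0 < q) (hr : 0 < r) (hr₁ : 0 < r₁) (hr₁le : r₁ ≤ min p (min q r)) :
    ∃ C₁ C₂ : ℝ, 0 < C₁ ∧ 0 < C₂ ∧
      ∀ F : Ed d × Ed d → ℂ, Measurable F →
        lpENN q volume (fun ξ : Ed d => lpSeq p (fun j : Fin d → ℤ =>
            eLpNorm (fun x => F (x, ξ)) r (volume.restrict (cell d j))))
          ≤ ENNReal.ofReal C₁ *
            lpSeq q (fun ι : Fin d → ℤ => lpSeq p (fun j : Fin d → ℤ =>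
              essSup (fun ξ : Ed d => eLpNorm (fun x => F (x, ξ)) r (volume.restrict (cell d j)))
                (volume.restrict (cell2pi d ι)))) ∧
        lpSeq q (fun ι : Fin d → ℤ => lpSeq p (fun j : Fin d → ℤ =>
            eLpNorm F r₁ (volume.restrict ((cell d j) ×ˢ (cell2pi d ι)))))
          ≤ ENNReal.ofReal C₂ *
            lpENN q volume (fun ξ : Ed d => lpSeq p (fun j : Fin d → ℤ =>
              eLpNorm (fun x => F (x, ξ)) r (volume.restrict (cell d j)))) :=
  stmt11_general d p q r r₁ hq hr₁ hr₁le

end
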